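/- Let λ, σ > 0, let D : ℝ^d → ℝ^{d×d} be Lipschitz continuous with respect to the Frobenius norm and satisfy D(0) = 0, let α > 0, and let E_1,…,E_M satisfy Assumptions (A1) and (A2). For X = (X^{m,i})_{m∈[M], i∈[N]} ∈ ℝ^{M·N·d}, define the drift F(X) ∈ ℝ^{M·N·d} with block components F^{m,i}(X) := −λ (X^{m,i} − X_α^m(ρ^{m,N}, M^{−m})) and the block-diagonal diffusion matrix G(X) with diagonal blocks σ D(X^{m,i} − X_α^m(ρ^{m,N}, M^{−m})), where ρ^{m,N} := (1/N) Σ_{i=1}^N δ_{X^{m,i}} and M^{−m} := (1/N) Σ_{i=1}^N (X^{1,i},…,X^{m−1,i},X^{m+1,i},…,X^{M,i}). Then, with φ(x) := |x|², there exists a constant C > 0 such that F(X)·∇φ(X) + (1/2)⟨G(X), ∇²φ(X) G(X)⟩ ≤ |F(X)|² + |X|² + ‖G(X)‖_F² ≤ C φ(X) for all X ∈ ℝ^{M·N·d}, where ⟨·,·⟩ is the Frobenius inner product and ‖·‖_F the Frobenius norm. -/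

import Mathlib

open MeasureTheory Finset
open scoped ENNReal NNReal

noncomputable section

/-- `ℝ^d` with the Euclidean norm. -/
abbrev Vec (d : ℕ) := EuclideanSpace ℝ (Fin d)

/-- `ℝ^{M·d}`, the space of opponents' strategies, with the Euclidean norm. -/
abbrev Opp (M d : ℕ) := EuclideanSpace ℝ (Fin M × Fin d)

/-- Euclidean norm of the concatenated vector `(x, y) ∈ ℝ^d × ℝ^{M·d}`. -/
def pairNorm {d M : ℕ} (x : Vec d) (y : Opp M d) : ℝ :=
  Real.sqrt (‖x‖ ^ 2 + ‖y‖ ^ 2)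

/-- Given strategies `Z^1, …, Z^{M+1}`, the vector `Z^{-m}` of all strategies except the
`m`-th one. -/
def oppOf {M d : ℕ} (m : Fin (M + 1)) (Z : Fin (M + 1) → Vec d) : Opp M d :=
  WithLp.toLp 2 fun p : Fin M × Fin d => Z (m.succAbove p.1) p.2

/-- The consensus point `X_α(ρ, Y) = (∫ x e^{-α E(x;Y)} dρ)/(∫ e^{-α E(x;Y)} dρ)`. -/
def consensus {d M : ℕ} (α : ℝ) (Em : Vec d → Opp M d → ℝ)
    (ρ : Measure (Vec d)) (Y : Opp M d) : Vec d :=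
  (∫ x, Real.exp (-α * Em x Y) ∂ρ)⁻¹ • ∫ x, Real.exp (-α * Em x Y) • x ∂ρ

/-- The mean `E[μ] = ∫ x dμ(x)` of a measure on `ℝ^d`. -/
def meanOf {d : ℕ} (μ : Measure (Vec d)) : Vec d := ∫ x, x ∂μ

/-- The empirical measure `(1/N) ∑_{i} δ_{X_i}`. -/
def empMeas {d N : ℕ} (X : Fin N → Vec d) : Measure (Vec d) :=
  (N : ℝ≥0∞)⁻¹ • ∑ i, Measure.dirac (X i)

/-- The `p`-Wasserstein distance, as an infimum over couplings. -/
def Wdist {d : ℕ} (p : ℝ) (μ ν : Measure (Vec d)) : ℝ :=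
  (sInf { e : ℝ≥0∞ | ∃ π : Measure (Vec d × Vec d), IsProbabilityMeasure π ∧
      π.map Prod.fst = μ ∧ π.map Prod.snd = ν ∧
      e = (∫⁻ z, (‖z.1 - z.2‖₊ : ℝ≥0∞) ^ p ∂π) ^ (1 / p) }).toReal

/-- Euclidean norm of a configuration `X = (X^{m,i}) ∈ ℝ^{(M+1)·N·d}`. -/
def confNorm {d M N : ℕ} (X : Fin (M + 1) → Fin N → Vec d) : ℝ :=
  Real.sqrt (∑ m, ∑ i, ‖X m i‖ ^ 2)

open scoped RealInnerProductSpace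

/-- Frobenius norm of a `d × d` real matrix. -/
def frobNorm {d : ℕ} (A : Matrix (Fin d) (Fin d) ℝ) : ℝ :=
  Real.sqrt (∑ i, ∑ j, (A i j) ^ 2)

/-- The consensus point of the `m`-th empirical measure of the configuration `X`. -/
def consE {d M N : ℕ} (α : ℝ) (E : Fin (M + 1) → Vec d → Opp M d → ℝ)
    (m : Fin (M + 1)) (X : Fin (M + 1) → Fin N → Vec d) : Vec d :=
  consensus α (E m) (empMeas (X m)) (oppOf m fun l => (N : ℝ)⁻¹ • ∑ i, X l i)

/-! The consensus point of an empirical measure is a convex combination of the particles, so it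
lies in the ball of radius `|X|`. Hence the drift and, since `D` is Lipschitz with `D 0 = 0`, the
diffusion grow at most linearly in `|X|`, while the first inequality is Cauchy–Schwarz and AM–GM
termwise. -/

lemma integral_empMeas {d N : ℕ} {F : Type*} [NormedAddCommGroup F] [NormedSpace ℝ F]
    [CompleteSpace F] (X : Fin N → Vec d) (f : Vec d → F) :
    ∫ x, f x ∂empMeas X = (N : ℝ)⁻¹ • ∑ i, f (X i) := by
  rw [empMeas, integral_smul_measure,
    integral_finsetSum_measure fun i _ => integrable_dirac enorm_lt_top]
  simp [integral_dirac, ENNReal.toReal_inv]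

lemma consensus_empMeas {d M N : ℕ} (hN : 0 < N) (α : ℝ) (Em : Vec d → Opp M d → ℝ)
    (X : Fin N → Vec d) (Y : Opp M d) :
    consensus α Em (empMeas X) Y = univ.centerMass (fun i => Real.exp (-α * Em (X i) Y)) X := by
  have hN' : (N : ℝ) ≠ 0 := by positivity
  rw [consensus, integral_empMeas, integral_empMeas, centerMass, smul_eq_mul, smul_smul,
    mul_inv_rev, mul_assoc, inv_mul_cancel₀ (inv_ne_zero hN'), mul_one]

lemma norm_consensus_empMeas_le {d M N : ℕ} (hN : 0 < N) (α : ℝ) (Em : Vec d → Opp M d → ℝ)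
    (X : Fin N → Vec d) (Y : Opp M d) {B : ℝ} (hB : ∀ i, ‖X i‖ ≤ B) :
    ‖consensus α Em (empMeas X) Y‖ ≤ B := by
  rw [consensus_empMeas hN, ← mem_closedBall_zero_iff]
  exact (convex_closedBall 0 B).centerMass_mem (fun i _ => (Real.exp_pos _).le)
    (sum_pos (fun i _ => Real.exp_pos _) ⟨⟨0, hN⟩, mem_univ _⟩)
    fun i _ => mem_closedBall_zero_iff.2 (hB i)

lemma confNorm_sq {d M N : ℕ} (X : Fin (M + 1) → Fin N → Vec d) :
    confNorm X ^ 2 = ∑ m, ∑ i, ‖X m i‖ ^ 2 :=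
  Real.sq_sqrt (by positivity)

lemma norm_le_confNorm {d M N : ℕ} (X : Fin (M + 1) → Fin N → Vec d) (m : Fin (M + 1))
    (i : Fin N) : ‖X m i‖ ≤ confNorm X := by
  refine Real.le_sqrt_of_sq_le ?_
  calc ‖X m i‖ ^ 2 ≤ ∑ j, ‖X m j‖ ^ 2 :=
        single_le_sum (f := fun j => ‖X m j‖ ^ 2) (fun _ _ => by positivity) (mem_univ i)
    _ ≤ ∑ m, ∑ j, ‖X m j‖ ^ 2 :=
        single_le_sum (f := fun m => ∑ j, ‖X m j‖ ^ 2) (fun _ _ => by positivity) (mem_univ m)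

lemma norm_sub_consE_le {d M N : ℕ} (α : ℝ) (E : Fin (M + 1) → Vec d → Opp M d → ℝ)
    (X : Fin (M + 1) → Fin N → Vec d) (m : Fin (M + 1)) (i : Fin N) :
    ‖X m i - consE α E m X‖ ≤ 2 * confNorm X := by
  have hcons : ‖consE α E m X‖ ≤ confNorm X :=
    norm_consensus_empMeas_le i.pos α (E m) (X m) _ (norm_le_confNorm X m)
  linarith [norm_sub_le (X m i) (consE α E m X), norm_le_confNorm X m i]

lemma frobNorm_smul {d : ℕ} (a : ℝ) (A : Matrix (Fin d) (Fin d) ℝ) :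
    frobNorm (a • A) = |a| * frobNorm A := by
  rw [frobNorm, frobNorm, ← Real.sqrt_sq_eq_abs, ← Real.sqrt_mul (sq_nonneg a), mul_sum]
  simp only [mul_sum, Matrix.smul_apply, smul_eq_mul, mul_pow]

lemma frobNorm_sq_le_of_lipschitz {d : ℕ} {D : Vec d → Matrix (Fin d) (Fin d) ℝ} {L : ℝ}
    (hLip : ∀ x y : Vec d, frobNorm (D x - D y) ≤ L * ‖x - y‖) (hD0 : D 0 = 0) (v : Vec d) :
    frobNorm (D v) ^ 2 ≤ L ^ 2 * ‖v‖ ^ 2 := by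
  have h := hLip v 0
  rw [hD0, sub_zero, sub_zero] at h
  rw [← mul_pow]
  exact pow_le_pow_left₀ (Real.sqrt_nonneg _) h 2

lemma inner_two_smul_le {V : Type*} [NormedAddCommGroup V] [InnerProductSpace ℝ V] (f x : V) :
    ⟪f, (2 : ℝ) • x⟫ ≤ ‖f‖ ^ 2 + ‖x‖ ^ 2 := by
  rw [real_inner_smul_right]
  nlinarith [real_inner_le_norm f x, sq_nonneg (‖f‖ - ‖x‖)]

lemma sum_sum_le_card_mul {ι κ : Type*} [Fintype ι] [Fintype κ] {f : ι → κ → ℝ} {b : ℝ}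
    (h : ∀ i j, f i j ≤ b) :
    ∑ i, ∑ j, f i j ≤ Fintype.card ι * Fintype.card κ * b := by
  calc ∑ i, ∑ j, f i j ≤ ∑ _i : ι, ∑ _j : κ, b :=
        sum_le_sum fun i _ => sum_le_sum fun j _ => h i j
    _ = Fintype.card ι * Fintype.card κ * b := by simp [mul_assoc]

theorem stmt8_general {d N M : ℕ}
    (lam sig : ℝ)
    (D : Vec d → Matrix (Fin d) (Fin d) ℝ)
    (L : ℝ)
    (hLip : ∀ x y : Vec d, frobNorm (D x - D y) ≤ L * ‖x - y‖)
    (hD0 : D 0 = 0)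
    (α : ℝ)
    (E : Fin (M + 1) → Vec d → Opp M d → ℝ) :
    ∃ C > (0 : ℝ), ∀ X : Fin (M + 1) → Fin N → Vec d,
      -- `F(X)·∇φ(X) + (1/2)⟨G(X), ∇²φ(X) G(X)⟩ ≤ |F(X)|² + |X|² + ‖G(X)‖_F²`
      ((∑ m, ∑ i, ⟪(-lam) • (X m i - consE α E m X), (2 : ℝ) • X m i⟫) +
          ∑ m, ∑ i, frobNorm (sig • D (X m i - consE α E m X)) ^ 2
        ≤ (∑ m, ∑ i, ‖(-lam) • (X m i - consE α E m X)‖ ^ 2) + confNorm X ^ 2 +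
            ∑ m, ∑ i, frobNorm (sig • D (X m i - consE α E m X)) ^ 2) ∧
      -- `|F(X)|² + |X|² + ‖G(X)‖_F² ≤ C φ(X)`
      ((∑ m, ∑ i, ‖(-lam) • (X m i - consE α E m X)‖ ^ 2) + confNorm X ^ 2 +
          ∑ m, ∑ i, frobNorm (sig • D (X m i - consE α E m X)) ^ 2
        ≤ C * confNorm X ^ 2) := by
  refine ⟨(M + 1) * N * ((lam ^ 2 + sig ^ 2 * L ^ 2) * 4) + 1, by positivity, fun X => ?_⟩
  constructor
  · have hdrift := sum_le_sum fun m (_ : m ∈ univ) => sum_le_sum fun i (_ : i ∈ univ) =>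
      inner_two_smul_le ((-lam) • (X m i - consE α E m X)) (X m i)
    simp only [sum_add_distrib] at hdrift
    linarith [confNorm_sq X]
  · have hterm : ∀ m i, ‖(-lam) • (X m i - consE α E m X)‖ ^ 2
        + frobNorm (sig • D (X m i - consE α E m X)) ^ 2
        ≤ (lam ^ 2 + sig ^ 2 * L ^ 2) * (4 * confNorm X ^ 2) := by
      intro m i
      have hv := norm_sub_consE_le α E X m i
      have hD := frobNorm_sq_le_of_lipschitz hLip hD0 (X m i - consE α E m X)
      rw [norm_smul, frobNorm_smul, mul_pow, mul_pow, Real.norm_eq_abs, sq_abs, sq_abs]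
      have hv2 : ‖X m i - consE α E m X‖ ^ 2 ≤ 4 * confNorm X ^ 2 := by
        nlinarith [norm_nonneg (X m i - consE α E m X)]
      nlinarith [sq_nonneg lam, mul_nonneg (sq_nonneg sig) (sq_nonneg L)]
    have hsum := sum_sum_le_card_mul hterm
    simp only [sum_add_distrib, Fintype.card_fin, Nat.cast_add, Nat.cast_one] at hsum
    linarith

/-- Lyapunov condition for the CBO particle system. -/
theorem stmt8 {d N M : ℕ} (hd : 0 < d) (hN : 0 < N)
    (lam sig : ℝ) (hlam : 0 < lam) (hsig : 0 < sig)
    (D : Vec d → Matrix (Fin d) (Fin d) ℝ)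
    (L : ℝ) (hL : 0 ≤ L)
    (hLip : ∀ x y : Vec d, frobNorm (D x - D y) ≤ L * ‖x - y‖)
    (hD0 : D 0 = 0)
    (α : ℝ) (hα : 0 < α)
    (E : Fin (M + 1) → Vec d → Opp M d → ℝ)
    -- Assumption (A1)
    (C₁ s : ℝ) (hC₁ : 0 < C₁) (hs : 0 ≤ s)
    (hA1 : ∀ (m : Fin (M + 1)) (x₀ x₁ : Vec d) (y₀ y₁ : Opp M d),
      |E m x₀ y₀ - E m x₁ y₁| ≤
        C₁ * (1 + pairNorm x₀ y₀ + pairNorm x₁ y₁) ^ s * pairNorm (x₀ - x₁) (y₀ - y₁))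
    -- Assumption (A2)
    (ℓ c G : ℝ) (hℓ : 0 ≤ ℓ) (hc : 0 < c) (hG : 0 < G)
    (hA2 : ∀ (m : Fin (M + 1)) (x : Vec d) (y : Opp M d),
      (1 / c) * (pairNorm x y ^ ℓ - G) ≤ E m x y ∧ E m x y ≤ c * (pairNorm x y ^ ℓ + G)) :
    ∃ C > (0 : ℝ), ∀ X : Fin (M + 1) → Fin N → Vec d,
      -- `F(X)·∇φ(X) + (1/2)⟨G(X), ∇²φ(X) G(X)⟩ ≤ |F(X)|² + |X|² + ‖G(X)‖_F²`
      ((∑ m, ∑ i, ⟪(-lam) • (X m i - consE α E m X), (2 : ℝ) • X m i⟫) +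
          ∑ m, ∑ i, frobNorm (sig • D (X m i - consE α E m X)) ^ 2
        ≤ (∑ m, ∑ i, ‖(-lam) • (X m i - consE α E m X)‖ ^ 2) + confNorm X ^ 2 +
            ∑ m, ∑ i, frobNorm (sig • D (X m i - consE α E m X)) ^ 2) ∧
      -- `|F(X)|² + |X|² + ‖G(X)‖_F² ≤ C φ(X)`
      ((∑ m, ∑ i, ‖(-lam) • (X m i - consE α E m X)‖ ^ 2) + confNorm X ^ 2 +
          ∑ m, ∑ i, frobNorm (sig • D (X m i - consE α E m X)) ^ 2
        ≤ C * confNorm X ^ 2) :=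
  stmt8_general lam sig D L hLip hD0 α E
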